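/- arXiv:2209.04273 — 2 statements merged into one kernel-verified Lean document; each statement's English description precedes it below -/
import Mathlib

section
/- Let x be a real number and for each integer k set a_k = (−1)^k / ( Γ(x+k) · Γ(x−k) ). Then the family (a_k)_{k∈ℤ} is sign-definite — i.e. either a_k > 0 for all k ∈ ℤ, or a_k < 0 for all k ∈ ℤ — if and only if 0 < x < 1 (and in that case all a_k are strictly positive). -/
private lemma gamma_sub_nat_sign (x : ℝ) (hx0 : 0 < x) (hx1 : x < 1) :
    ∀ n : ℕ, 0 < (-1 : ℝ) ^ n * Real.Gamma (x - n) := by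
  intro n
  induction n with
  | zero => simpa using Real.Gamma_pos_of_pos hx0
  | succ n ih =>
    have hc : x - ((n : ℝ) + 1) < 0 := by
      have : (0 : ℝ) ≤ n := Nat.cast_nonneg n
      linarith
    have hne : x - ((n : ℝ) + 1) ≠ 0 := ne_of_lt hc
    have h := Real.Gamma_add_one hne
    have heq : x - ((n : ℝ) + 1) + 1 = x - n := by ring
    rw [heq] at h
    rw [h] at ih
    push_cast
    rw [pow_succ]
    nlinarith [ih, hc]

private lemma keyNat (x : ℝ) (hx0 : 0 < x) (hx1 : x < 1) (n : ℕ) :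
    0 < (-1 : ℝ) ^ n / (Real.Gamma (x + n) * Real.Gamma (x - n)) := by
  have hA : 0 < Real.Gamma (x + n) :=
    Real.Gamma_pos_of_pos (by positivity)
  have hB := gamma_sub_nat_sign x hx0 hx1 n
  rcases Nat.even_or_odd n with he | ho
  · rw [he.neg_one_pow] at hB ⊢
    rw [one_mul] at hB
    exact div_pos one_pos (mul_pos hA hB)
  · rw [ho.neg_one_pow] at hB ⊢
    have hBneg : Real.Gamma (x - n) < 0 := by nlinarith
    exact div_pos_of_neg_of_neg (by norm_num) (mul_neg_of_pos_of_neg hA hBneg)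

private lemma keyInt (x : ℝ) (hx0 : 0 < x) (hx1 : x < 1) (k : ℤ) :
    0 < (-1 : ℝ) ^ k / (Real.Gamma (x + k) * Real.Gamma (x - k)) := by
  rcases Int.natAbs_eq k with h | h
  · rw [h, zpow_natCast]
    simp only [Int.cast_natCast]
    exact keyNat x hx0 hx1 k.natAbs
  · rw [h]
    have h1 : ((-1 : ℝ)) ^ (-(k.natAbs : ℤ)) = (-1 : ℝ) ^ (k.natAbs) := by
      rw [zpow_neg, zpow_natCast]
      rcases Nat.even_or_odd k.natAbs with he | ho
      · norm_num [he.neg_one_pow]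
      · norm_num [ho.neg_one_pow]
    rw [h1]
    simp only [Int.cast_neg, Int.cast_natCast]
    rw [show x + -(k.natAbs : ℝ) = x - k.natAbs from by ring,
        show x - -(k.natAbs : ℝ) = x + k.natAbs from by ring, mul_comm]
    exact keyNat x hx0 hx1 k.natAbs

/-- Complementary series condition for `𝔤 ≅ 𝔰𝔲(p,q)` with `p - q` even: the family
`a_k = (-1)^k / (Γ(x+k) Γ(x-k))`, `k ∈ ℤ`, is sign-definite if and only if `0 < x < 1`,
and in that case all `a_k` are strictly positive. (Here `Γ` vanishes at nonpositive
integers, so `a_k = 0` at such parameters.) -/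
theorem signDefinite_su_pq (x : ℝ) :
    (((∀ k : ℤ, 0 < (-1 : ℝ) ^ k / (Real.Gamma (x + k) * Real.Gamma (x - k))) ∨
        (∀ k : ℤ, (-1 : ℝ) ^ k / (Real.Gamma (x + k) * Real.Gamma (x - k)) < 0)) ↔
      (0 < x ∧ x < 1)) ∧
    ((0 < x ∧ x < 1) →
      ∀ k : ℤ, 0 < (-1 : ℝ) ^ k / (Real.Gamma (x + k) * Real.Gamma (x - k))) := by
  constructor
  · constructor
    · rintro (h | h)
      · -- use k = 0 and k = 1
        have h0 := h 0
        have h1 := h 1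
        simp only [zpow_zero, zpow_one, Int.cast_zero, Int.cast_one, add_zero, sub_zero] at h0 h1
        -- Γ x ≠ 0
        have hG : Real.Gamma x ≠ 0 := by
          intro hz
          rw [hz] at h0
          simp at h0
        have hx0 : x ≠ 0 := by
          intro hz; exact hG (by rw [hz]; exact Real.Gamma_zero)
        have hx1 : x ≠ 1 := by
          intro hz
          rw [hz] at h1
          norm_num [Real.Gamma_zero] at h1
        have hGm : Real.Gamma (x - 1) ≠ 0 := by
          intro hz
          have := Real.Gamma_add_one (sub_ne_zero.mpr hx1)
          rw [sub_add_cancel, hz, mul_zero] at this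
          exact hG this
        have e1 : Real.Gamma (x + 1) = x * Real.Gamma x := Real.Gamma_add_one hx0
        have e2 : Real.Gamma x = (x - 1) * Real.Gamma (x - 1) := by
          have := Real.Gamma_add_one (sub_ne_zero.mpr hx1)
          rwa [sub_add_cancel] at this
        have hden : Real.Gamma (x + 1) * Real.Gamma (x - 1) < 0 := by
          rcases div_pos_iff.mp h1 with ⟨ha, _⟩ | ⟨_, hb⟩
          · norm_num at ha
          · exact hb
        rw [e1, e2] at hden
        have hmul : x * (x - 1) < 0 := by
          nlinarith [sq_nonneg (Real.Gamma (x - 1)), sq_abs (Real.Gamma (x - 1))]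
        constructor
        · nlinarith
        · nlinarith
      · exfalso
        have h0 := h 0
        simp only [zpow_zero, Int.cast_zero, add_zero, sub_zero] at h0
        have : (0 : ℝ) ≤ 1 / (Real.Gamma x * Real.Gamma x) :=
          one_div_nonneg.mpr (mul_self_nonneg _)
        linarith
    · rintro ⟨hx0, hx1⟩
      exact Or.inl (keyInt x hx0 hx1)
  · rintro ⟨hx0, hx1⟩
    exact keyInt x hx0 hx1
end

section
/- Let a > 0 and ν be real numbers, and for each natural number k set c_k = ( (a+1−ν)/2 )_k / Γ( (ν+a+1)/2 + k ). Then the sequence (c_k)_{k∈ℕ} is sign-definite — i.e. either c_k > 0 for all k ∈ ℕ, or c_k < 0 for all k ∈ ℕ — if and only if −(a+1) < ν < a+1 (and in that case all c_k are strictly positive). -/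
/-- Complementary series condition for `𝔤 ≇ 𝔰𝔲(p,q), 𝔰𝔭(n,ℝ)`: the sequence
`c_k = ((a+1-ν)/2)_k / Γ((ν+a+1)/2 + k)`, `k ∈ ℕ`, is sign-definite if and only if
`-(a+1) < ν < a+1`, and in that case all `c_k` are strictly positive. (Here `Γ` vanishes
at nonpositive integers, so `c_k = 0` at such parameters.) -/
theorem signDefinite_general (a ν : ℝ) (ha : 0 < a) :
    (((∀ k : ℕ, 0 < (ascPochhammer ℝ k).eval ((a + 1 - ν) / 2) /
          Real.Gamma ((ν + a + 1) / 2 + k)) ∨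
        (∀ k : ℕ, (ascPochhammer ℝ k).eval ((a + 1 - ν) / 2) /
          Real.Gamma ((ν + a + 1) / 2 + k) < 0)) ↔
      (-(a + 1) < ν ∧ ν < a + 1)) ∧
    ((-(a + 1) < ν ∧ ν < a + 1) →
      ∀ k : ℕ, 0 < (ascPochhammer ℝ k).eval ((a + 1 - ν) / 2) /
        Real.Gamma ((ν + a + 1) / 2 + k)) := by
  set x : ℝ := (a + 1 - ν) / 2 with hx
  set y : ℝ := (ν + a + 1) / 2 with hy
  have hpos : (-(a + 1) < ν ∧ ν < a + 1) →
      ∀ k : ℕ, 0 < (ascPochhammer ℝ k).eval x / Real.Gamma (y + k) := by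
    rintro ⟨h1, h2⟩ k
    have hxpos : 0 < x := by rw [hx]; linarith
    have hypos : 0 < y + k := by
      have : 0 < y := by rw [hy]; linarith
      positivity
    exact div_pos (ascPochhammer_pos k x hxpos) (Real.Gamma_pos_of_pos hypos)
  refine ⟨⟨?_, fun h => Or.inl (hpos h)⟩, hpos⟩
  intro h
  constructor
  · -- show -(a+1) < ν
    by_contra hc
    push_neg at hc
    have hyle : y ≤ 0 := by rw [hy]; linarith
    have hxpos : 0 < x := by rw [hx]; linarith
    rcases h with h | h
    · -- all positive: contradiction at k = 0 and k = 1
      have h0 := h 0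
      have h1 := h 1
      simp only [ascPochhammer_zero, Polynomial.eval_one, ascPochhammer_one,
        Polynomial.eval_X, Nat.cast_zero, add_zero, Nat.cast_one] at h0 h1
      have hG : 0 < Real.Gamma y := by
        rcases lt_trichotomy (Real.Gamma y) 0 with hg | hg | hg
        · exfalso; have := div_neg_of_pos_of_neg one_pos hg; linarith
        · exfalso; rw [hg, div_zero] at h0; exact lt_irrefl 0 h0
        · exact hg
      have hyne : y ≠ 0 := by
        intro hy0; rw [hy0, Real.Gamma_zero] at hG; exact lt_irrefl 0 hG
      have hylt : y < 0 := lt_of_le_of_ne hyle hyne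
      have hG1 : Real.Gamma (y + 1) = y * Real.Gamma y := Real.Gamma_add_one hyne
      have hG1neg : Real.Gamma (y + 1) < 0 := by
        rw [hG1]; exact mul_neg_of_neg_of_pos hylt hG
      have := div_neg_of_pos_of_neg hxpos hG1neg
      linarith
    · -- all negative: contradiction at large k
      set k : ℕ := ⌈-y⌉₊ + 1 with hk
      have hyk : 0 < y + k := by
        have h1 : -y ≤ (⌈-y⌉₊ : ℝ) := Nat.le_ceil _
        have : (k : ℝ) = (⌈-y⌉₊ : ℝ) + 1 := by push_cast [hk]; ring
        rw [this]; linarith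
      have hkpos : 0 < (ascPochhammer ℝ k).eval x / Real.Gamma (y + k) :=
        div_pos (ascPochhammer_pos k x hxpos) (Real.Gamma_pos_of_pos hyk)
      exact absurd (h k) (not_lt.mpr hkpos.le)
  · -- show ν < a + 1
    by_contra hc
    push_neg at hc
    have hxle : x ≤ 0 := by rw [hx]; linarith
    have hypos : 0 < y := by rw [hy]; linarith
    rcases h with h | h
    · have h1 := h 1
      simp only [ascPochhammer_one, Polynomial.eval_X, Nat.cast_one] at h1
      have hG1 : 0 < Real.Gamma (y + 1) := Real.Gamma_pos_of_pos (by linarith)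
      have : (ascPochhammer ℝ 1).eval x / Real.Gamma (y + 1) ≤ 0 := by
        simp only [ascPochhammer_one, Polynomial.eval_X]
        exact div_nonpos_of_nonpos_of_nonneg hxle hG1.le
      simp only [ascPochhammer_one, Polynomial.eval_X, Nat.cast_one] at this
      linarith
    · have h0 := h 0
      simp only [ascPochhammer_zero, Polynomial.eval_one, Nat.cast_zero, add_zero] at h0
      have : 0 < (1 : ℝ) / Real.Gamma y :=
        div_pos one_pos (Real.Gamma_pos_of_pos hypos)
      linarith
end
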